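/- arXiv:1706.07358 — 7 statements merged into one kernel-verified Lean document; each statement's English description precedes it below -/
import Mathlib

section
/- Let D ≥ 1, let ι be a finite type, and for each q : ι let k q ≥ 1 and τ q : Fin D → Equiv.Perm (Fin (k q)) encode closed D-coloured graphs that are pairwise non-isomorphic; let ℓ q : (Fin (k q) → Fin D → ℤ) → ℂ be finitely supported coefficient functions. Fix c : ι and let G be the set of permutations π of Fin (k c) that are white parts of coloured automorphisms of τ c. For X : Fin (k c) → Fin D → ℤ define the graph derivative Der(X) := ∑_{q : ι} ∑_{Y in the support of ℓ q} (ℓ q Y) · (if k q = k c and τ q is isomorphic to τ c then ∑_{π ∈ G} ∏_{i : Fin (k c)} (if Y (π i) = X i then 1 else 0) else 0). Then Der(X) = ∑_{π ∈ G} ℓ c (X ∘ π⁻¹). -/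
open scoped Classical

/-- **Graph derivative of a functional generated by pairwise non-isomorphic closed
coloured graphs (Proposition 3.1).**  Each closed `D`-coloured graph is encoded by a
tuple `τ q : Fin D → Equiv.Perm (Fin (k q))`; the graphs are pairwise non-isomorphic, and
`ℓ q` are finitely supported coefficient functions.  For a fixed graph `c` with group `G`
of white parts of coloured automorphisms, the graph derivative of the generated functional
with respect to `c` at `X`, i.e.
`∑ q, ∑ Y ∈ supp (ℓ q), ℓ q Y · (∂ 𝒬(Y) / ∂ 𝒞(X))` with the Kronecker-delta expression
for `∂𝒬(Y)/∂𝒞(X)`, equals `∑ π ∈ G, ℓ c (X ∘ π⁻¹)`. -/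
theorem graph_derivative_of_generated_functional
    (D : ℕ) (hD : 1 ≤ D) (ι : Type) [Fintype ι]
    (k : ι → ℕ) (hk : ∀ q : ι, 1 ≤ k q)
    (τ : (q : ι) → Fin D → Equiv.Perm (Fin (k q)))
    (hnoniso : ∀ q q' : ι, q ≠ q' → ∀ h : k q = k q',
      ¬ ∃ π ρ : Equiv.Perm (Fin (k q')), ∀ a : Fin D,
        τ q' a = ρ * (Equiv.permCongr (finCongr h) (τ q a)) * π⁻¹)
    (ℓ : (q : ι) → (Fin (k q) → Fin D → ℤ) →₀ ℂ)
    (c : ι)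
    (G : Finset (Equiv.Perm (Fin (k c))))
    (hG : ∀ π : Equiv.Perm (Fin (k c)),
      π ∈ G ↔ ∃ ρ : Equiv.Perm (Fin (k c)), ∀ a : Fin D, ρ * τ c a = τ c a * π)
    (X : Fin (k c) → Fin D → ℤ) :
    (∑ q : ι, ∑ Y ∈ (ℓ q).support, (ℓ q) Y *
      (if h : k q = k c then
        (if (∃ π ρ : Equiv.Perm (Fin (k c)), ∀ a : Fin D,
              τ c a = ρ * (Equiv.permCongr (finCongr h) (τ q a)) * π⁻¹) then
          ∑ π ∈ G, ∏ i : Fin (k c),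
            (if Y (Fin.cast h.symm (π i)) = X i then (1 : ℂ) else 0)
        else 0)
      else 0))
    = ∑ π ∈ G, (ℓ c) (fun i => X (π⁻¹ i)) := by
  have hzero : ∀ q : ι, q ≠ c → (∑ Y ∈ (ℓ q).support, (ℓ q) Y *
      (if h : k q = k c then
        (if (∃ π ρ : Equiv.Perm (Fin (k c)), ∀ a : Fin D,
              τ c a = ρ * (Equiv.permCongr (finCongr h) (τ q a)) * π⁻¹) then
          ∑ π ∈ G, ∏ i : Fin (k c),
            (if Y (Fin.cast h.symm (π i)) = X i then (1 : ℂ) else 0)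
        else 0)
      else 0)) = 0 := by
    intro q hq
    refine Finset.sum_eq_zero fun Y _ => ?_
    split
    · next h =>
      rw [if_neg (hnoniso q c hq h), mul_zero]
    · rw [mul_zero]
  rw [Fintype.sum_eq_single c hzero]
  have hiso : ∃ π ρ : Equiv.Perm (Fin (k c)), ∀ a : Fin D,
      τ c a = ρ * (Equiv.permCongr (finCongr (rfl : k c = k c)) (τ c a)) * π⁻¹ :=
    ⟨1, 1, fun a => by simp; rfl⟩
  simp only [dif_pos (rfl : k c = k c), if_pos hiso]
  have key : ∀ Y : Fin (k c) → Fin D → ℤ, ∀ π : Equiv.Perm (Fin (k c)),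
      (∏ i : Fin (k c),
        (if Y (Fin.cast (rfl : k c = k c).symm (π i)) = X i then (1:ℂ) else 0))
        = if Y = (fun i => X (π⁻¹ i)) then 1 else 0 := by
    intro Y π
    rw [Finset.prod_boole]
    congr 1
    simp only [Fin.cast_refl, Finset.mem_univ, id_eq, forall_const, eq_iff_iff]
    constructor
    · intro h
      funext j
      have := h (π⁻¹ j)
      simpa using this
    · intro h i
      rw [h]; simp
  calc ∑ Y ∈ (ℓ c).support, (ℓ c) Y *
        ∑ π ∈ G, ∏ i : Fin (k c),
          (if Y (Fin.cast (rfl : k c = k c).symm (π i)) = X i then (1:ℂ) else 0)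
      = ∑ π ∈ G, ∑ Y ∈ (ℓ c).support,
          (if Y = (fun i => X (π⁻¹ i)) then (ℓ c) Y else 0) := by
        simp_rw [Finset.mul_sum]
        rw [Finset.sum_comm]
        refine Finset.sum_congr rfl fun π _ => Finset.sum_congr rfl fun Y _ => ?_
        rw [key Y π, mul_ite, mul_one, mul_zero]
    _ = ∑ π ∈ G, (ℓ c) (fun i => X (π⁻¹ i)) := by
        refine Finset.sum_congr rfl fun π _ => ?_
        rw [Finset.sum_ite_eq' (ℓ c).support (fun i => X (π⁻¹ i)) (ℓ c)]
        split
        · rfl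
        · next h => exact (Finsupp.notMem_support_iff.mp h).symm
end

section
/- Let E be the closed 3-coloured graph on vertex set ZMod 3 encoded by τ 0 = Equiv.swap 0 1, τ 1 = (translation by 1), τ 2 = (translation by 2). Then the only coloured automorphism of E is the identity pair (1, 1); i.e. the coloured automorphism group of E is trivial. -/
/-- The group of coloured automorphisms of a closed `D`-coloured graph encoded by
`τ : Fin D → Equiv.Perm β`: pairs `(π, ρ)` of permutations (white part, black part)
with `ρ * τ a = τ a * π` for every colour `a`. -/
def colouredAut {D : ℕ} {β : Type*} (τ : Fin D → Equiv.Perm β) :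
    Subgroup (Equiv.Perm β × Equiv.Perm β) where
  carrier := {p | ∀ a : Fin D, p.2 * τ a = τ a * p.1}
  one_mem' := by intro a; simp
  mul_mem' := by
    intro p q hp hq a
    show p.2 * q.2 * τ a = τ a * (p.1 * q.1)
    rw [mul_assoc, hq a, ← mul_assoc, hp a, mul_assoc]
  inv_mem' := by
    intro p hp a
    show p.2⁻¹ * τ a = τ a * p.1⁻¹
    calc p.2⁻¹ * τ a = p.2⁻¹ * (τ a * p.1 * p.1⁻¹) := by group
      _ = p.2⁻¹ * (p.2 * τ a * p.1⁻¹) := by rw [← hp a]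
      _ = τ a * p.1⁻¹ := by group

/-- **The graph `E` obtained from `K_c(3,3)` by a 0-coloured edge swap has trivial
coloured automorphism group.**  `E` is encoded on `ZMod 3` by `τ 0 = Equiv.swap 0 1`,
`τ 1 = (· + 1)`, `τ 2 = (· + 2)`.  Its only coloured automorphism is the identity pair. -/
theorem colouredAut_E_trivial :
    let τ : Fin 3 → Equiv.Perm (ZMod 3) :=
      ![Equiv.swap 0 1, Equiv.addRight 1, Equiv.addRight 2]
    (∀ p : Equiv.Perm (ZMod 3) × Equiv.Perm (ZMod 3),
      p ∈ colouredAut τ ↔ p = 1) ∧ colouredAut τ = ⊥ := by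
  intro τ
  have key : ∀ p : Equiv.Perm (ZMod 3) × Equiv.Perm (ZMod 3),
      p ∈ colouredAut τ ↔ p = 1 := by
    have : ∀ p : Equiv.Perm (ZMod 3) × Equiv.Perm (ZMod 3),
        (∀ a : Fin 3, p.2 * τ a = τ a * p.1) ↔ p = 1 := by decide
    exact this
  exact ⟨key, by ext p; simp [key p, Subgroup.mem_bot]⟩
end

section
/- Let D ≥ 1, let β be a nonempty finite type, and let τ : Fin D → Equiv.Perm β encode a connected closed D-coloured graph C. For n : ℕ let the n-fold disjoint union of C be the closed D-coloured graph on Fin n × β encoded by τ̂ a : (j, x) ↦ (j, τ a x). Then the number of coloured automorphisms of the n-fold disjoint union equals n! * m^n, where m is the number of coloured automorphisms of C. -/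
/-- The monoid hom lifting a permutation of `β` to a permutation of `Fin n × β`
acting trivially on the first coordinate. -/
private def liftHom (n : ℕ) (β : Type*) : Equiv.Perm β →* Equiv.Perm (Fin n × β) where
  toFun σ := Equiv.prodCongr (Equiv.refl (Fin n)) σ
  map_one' := Equiv.ext (by rintro ⟨j, x⟩; rfl)
  map_mul' σ η := Equiv.ext (by rintro ⟨j, x⟩; rfl)

/-- **Coloured automorphisms of an `n`-fold disjoint union of a connected graph:
`|Aut_c(C^{⊔n})| = n! · |Aut_c(C)|^n`.**  The connected closed `D`-coloured graph `C` is
encoded by `τ : Fin D → Equiv.Perm β` (connectedness: the subgroup generated by the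
permutations `(τ a)⁻¹ * τ b` acts transitively on `β`); its `n`-fold disjoint union is
encoded on `Fin n × β` by `(j, x) ↦ (j, τ a x)`. -/
theorem colouredAut_card_disjoint_union (D : ℕ) (hD : 1 ≤ D)
    (β : Type) [Fintype β] [Nonempty β] (τ : Fin D → Equiv.Perm β)
    (hconn : ∀ x y : β, ∃ g ∈ Subgroup.closure
      {σ : Equiv.Perm β | ∃ a b : Fin D, σ = (τ a)⁻¹ * τ b}, g x = y)
    (n : ℕ) :
    Nat.card (colouredAut (fun a => Equiv.prodCongr (Equiv.refl (Fin n)) (τ a))) =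
      n.factorial * (Nat.card (colouredAut τ)) ^ n := by
  classical
  set τ' : Fin D → Equiv.Perm (Fin n × β) :=
    fun a => Equiv.prodCongr (Equiv.refl (Fin n)) (τ a) with hτ'def
  set L : Equiv.Perm β →* Equiv.Perm (Fin n × β) := liftHom n β with hLdef
  have hLτ : ∀ a, L (τ a) = τ' a := fun a => rfl
  have hLfst : ∀ (g : Equiv.Perm β) (z : Fin n × β), ((L g) z).1 = z.1 := by
    rintro g ⟨j, x⟩; rfl
  have hτfst : ∀ (a : Fin D) (z : Fin n × β), (τ' a z).1 = z.1 := by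
    rintro a ⟨j, x⟩; rfl
  set S : Set (Equiv.Perm β) := {σ : Equiv.Perm β | ∃ a b : Fin D, σ = (τ a)⁻¹ * τ b}
    with hSdef
  -- the bijection
  set Φ : Equiv.Perm (Fin n) × (Fin n → colouredAut τ) →
      colouredAut τ' := fun fc =>
    ⟨(Equiv.prodShear fc.1 (fun j => ((fc.2 j : Equiv.Perm β × Equiv.Perm β)).1),
      Equiv.prodShear fc.1 (fun j => ((fc.2 j : Equiv.Perm β × Equiv.Perm β)).2)), by
      intro a
      apply Equiv.ext
      rintro ⟨j, x⟩
      show (fc.1 j, ((fc.2 j : Equiv.Perm β × Equiv.Perm β)).2 (τ a x))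
          = (fc.1 j, τ a (((fc.2 j : Equiv.Perm β × Equiv.Perm β)).1 x))
      have h := (fc.2 j).2 a
      have h' := congrArg (fun σ : Equiv.Perm β => σ x) h
      simp only [Equiv.Perm.mul_apply] at h'
      rw [h']⟩ with hΦdef
  have hinj : Function.Injective Φ := by
    rintro ⟨f1, c1⟩ ⟨f2, c2⟩ h
    have hval := congrArg Subtype.val h
    have h1 := congrArg Prod.fst hval
    have h2 := congrArg Prod.snd hval
    simp only [hΦdef] at h1 h2
    obtain ⟨x₀⟩ := ‹Nonempty β›
    have hfeq : f1 = f2 := by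
      apply Equiv.ext
      intro j
      have := congrArg (fun σ : Equiv.Perm (Fin n × β) => (σ (j, x₀)).1) h1
      simpa using this
    have hceq : c1 = c2 := by
      funext j
      apply Subtype.ext
      apply Prod.ext
      · apply Equiv.ext
        intro x
        have := congrArg (fun σ : Equiv.Perm (Fin n × β) => (σ (j, x)).2) h1
        simpa using this
      · apply Equiv.ext
        intro x
        have := congrArg (fun σ : Equiv.Perm (Fin n × β) => (σ (j, x)).2) h2
        simpa using this
    rw [Prod.mk.injEq]
    exact ⟨hfeq, hceq⟩
  have hsurj : Function.Surjective Φ := by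
    rintro ⟨⟨π, ρ⟩, hp⟩
    have hp' : ∀ a, ρ * τ' a = τ' a * π := hp
    -- π commutes with the lifted generators
    have key : ∀ a b : Fin D, Commute π ((τ' a)⁻¹ * τ' b) := by
      intro a b
      have hπ : ∀ a : Fin D, (τ' a)⁻¹ * ρ * τ' a = π := by
        intro a
        rw [mul_assoc, hp' a, ← mul_assoc, inv_mul_cancel, one_mul]
      show π * ((τ' a)⁻¹ * τ' b) = ((τ' a)⁻¹ * τ' b) * π
      calc π * ((τ' a)⁻¹ * τ' b)
          = ((τ' a)⁻¹ * ρ * τ' a) * ((τ' a)⁻¹ * τ' b) := by rw [hπ a]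
        _ = (τ' a)⁻¹ * (ρ * τ' b) := by group
        _ = (τ' a)⁻¹ * (τ' b * π) := by rw [hp' b]
        _ = ((τ' a)⁻¹ * τ' b) * π := by group
    have hcomm : ∀ g ∈ Subgroup.closure S, Commute π (L g) := by
      intro g hg
      induction hg using Subgroup.closure_induction with
      | mem σ hσ =>
        obtain ⟨a, b, rfl⟩ := hσ
        have : L ((τ a)⁻¹ * τ b) = (τ' a)⁻¹ * τ' b := by
          rw [map_mul, map_inv, hLτ, hLτ]
        rw [this]
        exact key a b
      | one => rw [map_one]; exact Commute.one_right π
      | mul g h _ _ ihg ihh => rw [map_mul]; exact ihg.mul_right ihh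
      | inv g _ ih => rw [map_inv]; exact ih.inv_right
    obtain ⟨x₀⟩ := ‹Nonempty β›
    -- the first coordinate of π (j, x) does not depend on x
    have hfst : ∀ (j : Fin n) (x y : β), (π (j, x)).1 = (π (j, y)).1 := by
      intro j x y
      obtain ⟨g, hg, hgxy⟩ := hconn x y
      have hc := hcomm g hg
      have h0 := congrArg (fun σ : Equiv.Perm (Fin n × β) => σ (j, x)) hc
      simp only [Equiv.Perm.mul_apply] at h0
      have hLjx : (L g) (j, x) = (j, y) := by
        show ((j : Fin n), g x) = (j, y)
        rw [hgxy]
      rw [hLjx] at h0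
      rw [h0, hLfst]
    set f : Fin n → Fin n := fun j => (π (j, x₀)).1 with hfdef
    have hf : ∀ j x, (π (j, x)).1 = f j := fun j x => hfst j x x₀
    have hfsurj : Function.Surjective f := by
      intro k
      refine ⟨(π.symm (k, x₀)).1, ?_⟩
      calc f ((π.symm (k, x₀)).1)
          = (π ((π.symm (k, x₀)).1, (π.symm (k, x₀)).2)).1 :=
            (hf _ (π.symm (k, x₀)).2).symm
        _ = (π (π.symm (k, x₀))).1 := by rw [Prod.mk.eta]
        _ = k := by rw [Equiv.apply_symm_apply]
    have hfbij : Function.Bijective f := Finite.surjective_iff_bijective.mp hfsurj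
    set F : Equiv.Perm (Fin n) := Equiv.ofBijective f hfbij with hFdef
    -- the first coordinate of ρ (j, x) is also f j
    have a₀ : Fin D := ⟨0, hD⟩
    have hfρ : ∀ j x, (ρ (j, x)).1 = f j := by
      intro j x
      have h := congrArg (fun σ : Equiv.Perm (Fin n × β) => σ (j, (τ a₀)⁻¹ x)) (hp' a₀)
      simp only [Equiv.Perm.mul_apply] at h
      have e1 : τ' a₀ (j, (τ a₀)⁻¹ x) = (j, x) := by
        show ((j : Fin n), τ a₀ ((τ a₀)⁻¹ x)) = (j, x)
        rw [Equiv.Perm.inv_def, Equiv.apply_symm_apply]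
      rw [e1] at h
      rw [h, hτfst, hf]
    -- the per-copy permutations
    have hP : ∀ j : Fin n, Function.Bijective (fun x : β => (π (j, x)).2) := by
      intro j
      apply Finite.injective_iff_bijective.mp
      intro x y hxy
      have : π (j, x) = π (j, y) := by
        apply Prod.ext
        · rw [hf, hf]
        · exact hxy
      have := π.injective this
      exact (Prod.mk.injEq _ _ _ _).mp this |>.2
    have hR : ∀ j : Fin n, Function.Bijective (fun x : β => (ρ (j, x)).2) := by
      intro j
      apply Finite.injective_iff_bijective.mp
      intro x y hxy
      have : ρ (j, x) = ρ (j, y) := by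
        apply Prod.ext
        · rw [hfρ, hfρ]
        · exact hxy
      have := ρ.injective this
      exact (Prod.mk.injEq _ _ _ _).mp this |>.2
    set c : Fin n → colouredAut τ := fun j =>
      ⟨(Equiv.ofBijective _ (hP j), Equiv.ofBijective _ (hR j)), by
        intro a
        ext x
        show (ρ (j, τ a x)).2 = τ a ((π (j, x)).2)
        have h := congrArg (fun σ : Equiv.Perm (Fin n × β) => σ (j, x)) (hp' a)
        simp only [Equiv.Perm.mul_apply] at h
        have e1 : τ' a (j, x) = (j, τ a x) := rfl
        rw [e1] at h
        rw [h]
        rfl⟩ with hcdef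
    refine ⟨(F, c), ?_⟩
    apply Subtype.ext
    apply Prod.ext
    · apply Equiv.ext
      rintro ⟨j, x⟩
      exact Prod.ext (hf j x).symm rfl
    · apply Equiv.ext
      rintro ⟨j, x⟩
      exact Prod.ext (hfρ j x).symm rfl
  have hcard := Nat.card_eq_of_bijective Φ ⟨hinj, hsurj⟩
  rw [← hcard, Nat.card_prod, Nat.card_fun, Nat.card_eq_fintype_card,
    Fintype.card_perm, Fintype.card_fin, Nat.card_eq_fintype_card (α := Fin n),
    Fintype.card_fin]
end

section
/- Let k ≥ 1 and let τ : Fin 3 → Equiv.Perm (Fin k) encode a connected closed 3-coloured graph with τ 1 = τ 2 (the 2-coloured and 3-coloured edges coincide). Then this graph is isomorphic to X_{2k}, the closed 3-coloured graph on ZMod k encoded by (translation by 1, identity, identity); i.e. there exist permutations π, ρ identifying Fin k with ZMod k such that ρ * (τ a) * π⁻¹ is translation by 1 for a = 0 and the identity for a = 1, 2. -/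
/-- **Connected boundary graphs of the `V_1`-model are the cyclic graphs `X_{2k}`.**
If a connected closed 3-coloured graph encoded by `τ : Fin 3 → Equiv.Perm (Fin k)` has
coinciding 2- and 3-coloured edges (`τ 1 = τ 2`), then it is isomorphic to `X_{2k}`, the
graph on `ZMod k` encoded by `((· + 1), 1, 1)`: there are bijections `π`, `ρ` relabelling
white resp. black vertices by `ZMod k` transporting `τ` to `((· + 1), id, id)`. -/
theorem connected_with_equal_colours_iso_cyclic (k : ℕ) (hk : 1 ≤ k)
    (τ : Fin 3 → Equiv.Perm (Fin k))
    (hconn : ∀ x y : Fin k, ∃ g ∈ Subgroup.closure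
      {σ : Equiv.Perm (Fin k) | ∃ a b : Fin 3, σ = (τ a)⁻¹ * τ b}, g x = y)
    (h12 : τ 1 = τ 2) :
    ∃ π ρ : Fin k ≃ ZMod k,
      (∀ x : ZMod k, ρ (τ 0 (π.symm x)) = x + 1) ∧
      (∀ x : ZMod k, ρ (τ 1 (π.symm x)) = x) ∧
      (∀ x : ZMod k, ρ (τ 2 (π.symm x)) = x) := by
  haveI : NeZero k := ⟨by omega⟩
  set σ : Equiv.Perm (Fin k) := (τ 1)⁻¹ * τ 0 with hσ
  have hτ : ∀ a : Fin 3, τ a = τ 0 ∨ τ a = τ 1 := by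
    intro a; fin_cases a
    · left; rfl
    · right; rfl
    · right; exact h12.symm
  have hsub : Subgroup.closure
      {σ : Equiv.Perm (Fin k) | ∃ a b : Fin 3, σ = (τ a)⁻¹ * τ b}
      ≤ Subgroup.zpowers σ := by
    rw [Subgroup.closure_le]
    rintro g ⟨a, b, rfl⟩
    rcases hτ a with ha | ha <;> rcases hτ b with hb | hb <;> rw [ha, hb]
    · simpa using Subgroup.one_mem _
    · have : (τ 0)⁻¹ * τ 1 = σ⁻¹ := by rw [hσ]; group
      rw [this]; exact Subgroup.inv_mem _ (Subgroup.mem_zpowers σ)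
    · exact Subgroup.mem_zpowers σ
    · simpa using Subgroup.one_mem _
  set x0 : Fin k := ⟨0, hk⟩ with hx0
  have htrans : ∀ y : Fin k, ∃ n : ℕ, (σ ^ n) x0 = y := by
    intro y
    obtain ⟨g, hg, hgy⟩ := hconn x0 y
    have hg' : g ∈ Subgroup.zpowers σ := hsub hg
    rw [← mem_powers_iff_mem_zpowers] at hg'
    obtain ⟨n, rfl⟩ := hg'
    exact ⟨n, hgy⟩
  set m : ℕ := Function.minimalPeriod (⇑σ) x0 with hm
  have hpow : ∀ n : ℕ, (σ ^ n) x0 = (⇑σ)^[n] x0 := by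
    intro n; rw [Equiv.Perm.coe_pow]
  have hper : Function.IsPeriodicPt (⇑σ) (orderOf σ) x0 := by
    unfold Function.IsPeriodicPt Function.IsFixedPt
    rw [← hpow, pow_orderOf_eq_one]; rfl
  have hmpos : 0 < m := hper.minimalPeriod_pos (orderOf_pos σ)
  have hmod : ∀ n : ℕ, (σ ^ (n % m)) x0 = (σ ^ n) x0 := by
    intro n; rw [hpow, hpow, hm, Function.iterate_mod_minimalPeriod_eq]
  have hinj : ∀ a b : ℕ, a < m → b < m → (σ ^ a) x0 = (σ ^ b) x0 → a = b := by
    intro a b ha hb hab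
    wlog hle : a ≤ b generalizing a b
    · exact (this b a hb ha hab.symm (by omega)).symm
    have hcomm : (σ ^ (b - a)) ((σ ^ a) x0) = (σ ^ a) ((σ ^ (b - a)) x0) := by
      rw [← Equiv.Perm.mul_apply, ← Equiv.Perm.mul_apply, ← pow_add, ← pow_add,
        Nat.sub_add_cancel hle, Nat.add_sub_cancel' hle]
    have h2 : (σ ^ a) ((σ ^ (b - a)) x0) = (σ ^ a) x0 := by
      rw [← hcomm, ← Equiv.Perm.mul_apply, ← pow_add, Nat.sub_add_cancel hle]
      exact hab.symm
    have h1 : (σ ^ (b - a)) x0 = x0 := (σ ^ a).injective h2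
    have hdvd : m ∣ b - a := by
      apply Function.IsPeriodicPt.minimalPeriod_dvd
      unfold Function.IsPeriodicPt Function.IsFixedPt
      rw [← hpow]; exact h1
    have h0 : b - a = 0 := Nat.eq_zero_of_dvd_of_lt hdvd (by omega)
    omega
  have hmk : m = k := by
    have hb : Function.Bijective (fun i : Fin m => (σ ^ (i : ℕ)) x0) := by
      constructor
      · intro a b hab
        exact Fin.ext (hinj a b a.2 b.2 hab)
      · intro y
        obtain ⟨n, hn⟩ := htrans y
        refine ⟨⟨n % m, Nat.mod_lt _ hmpos⟩, ?_⟩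
        show (σ ^ (n % m)) x0 = y
        rw [hmod n, hn]
    have := Fintype.card_of_bijective hb
    simpa using this
  have hmod' : ∀ n : ℕ, (σ ^ (n % k)) x0 = (σ ^ n) x0 := by
    intro n; have h := hmod n; rwa [hmk] at h
  have hfb : Function.Bijective (fun x : ZMod k => (σ ^ x.val) x0) := by
    constructor
    · intro a b hab
      have := hinj a.val b.val (by rw [hmk]; exact ZMod.val_lt a) (by rw [hmk]; exact ZMod.val_lt b) hab
      exact ZMod.val_injective k this
    · intro y
      obtain ⟨n, hn⟩ := htrans y
      refine ⟨(n : ZMod k), ?_⟩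
      show (σ ^ ((n : ZMod k)).val) x0 = y
      rw [ZMod.val_natCast, hmod' n, hn]
  set f : ZMod k ≃ Fin k := Equiv.ofBijective _ hfb with hf
  have hfn : ∀ n : ℕ, f (n : ZMod k) = (σ ^ n) x0 := by
    intro n
    show (σ ^ ((n : ZMod k)).val) x0 = (σ ^ n) x0
    rw [ZMod.val_natCast, hmod' n]
  have hfs : ∀ x : ZMod k, f (x + 1) = σ (f x) := by
    intro x
    have hx : ((x.val : ℕ) : ZMod k) = x := ZMod.natCast_rightInverse x
    have h1 : x + 1 = ((x.val + 1 : ℕ) : ZMod k) := by push_cast [hx]; ring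
    rw [h1, hfn (x.val + 1), ← hx, hfn x.val, pow_succ', Equiv.Perm.mul_apply]
    congr 2
    rw [ZMod.val_natCast, Nat.mod_eq_of_lt (ZMod.val_lt x)]
  refine ⟨f.symm, ((τ 1)⁻¹ : Equiv.Perm (Fin k)).trans f.symm, ?_, ?_, ?_⟩
  · intro x
    simp only [Equiv.trans_apply, Equiv.symm_symm]
    have h2 : ((τ 1)⁻¹ : Equiv.Perm (Fin k)) (τ 0 (f x)) = σ (f x) := rfl
    rw [h2, ← hfs, Equiv.symm_apply_apply]
  · intro x
    simp
  · intro x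
    rw [← h12]; simp
end

section
/- Let k ≥ 1. (i) Two closed 3-coloured graphs encoded by (τ 0, τ 1, τ 1) and (τ' 0, τ' 1, τ' 1) on Fin k (each with coinciding 1- and 2-coloured edges) are isomorphic if and only if the permutations (τ 0)⁻¹ * (τ 1) and (τ' 0)⁻¹ * (τ' 1) are conjugate in Equiv.Perm (Fin k). (ii) Consequently, the number of isomorphism classes of closed 3-coloured graphs with 2k vertices whose 1-coloured and 2-coloured edge pairings coincide equals the number of partitions of k. -/
open Equiv

/-- Isomorphism relation on closed 3-coloured graphs with coinciding 1- and 2-coloured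
edges, encoded by pairs of permutations `(τ 0, τ 1)` (the graph being `(τ 0, τ 1, τ 1)`). -/
def pairGraphIsoRel (k : ℕ)
    (p p' : Equiv.Perm (Fin k) × Equiv.Perm (Fin k)) : Prop :=
  ∃ π ρ : Equiv.Perm (Fin k), p'.1 = ρ * p.1 * π⁻¹ ∧ p'.2 = ρ * p.2 * π⁻¹


lemma rel_iff_isConj' (k : ℕ) (p p' : Perm (Fin k) × Perm (Fin k)) :
    (∃ π ρ : Perm (Fin k), p'.1 = ρ * p.1 * π⁻¹ ∧ p'.2 = ρ * p.2 * π⁻¹) ↔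
      IsConj (p.1⁻¹ * p.2) (p'.1⁻¹ * p'.2) := by
  constructor
  · rintro ⟨π, ρ, h1, h2⟩
    rw [isConj_iff]
    exact ⟨π, by rw [h1, h2]; group⟩
  · rw [isConj_iff]
    rintro ⟨c, hc⟩
    refine ⟨c, p'.1 * c * p.1⁻¹, by group, ?_⟩
    have : p'.2 = p'.1 * (c * (p.1⁻¹ * p.2) * c⁻¹) := by rw [hc]; group
    rw [this]; group

noncomputable def permPart (k : ℕ) (σ : Perm (Fin k)) : Nat.Partition k :=
  ⟨σ.partition.parts, σ.partition.parts_pos, by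
    simpa using σ.partition.parts_sum⟩

lemma permPart_eq_iff (k : ℕ) (σ τ : Perm (Fin k)) :
    permPart k σ = permPart k τ ↔ IsConj σ τ := by
  rw [Equiv.Perm.partition_eq_of_isConj]
  simp only [permPart, Nat.Partition.ext_iff]

lemma permPart_surj (k : ℕ) : Function.Surjective (permPart k) := by
  intro P
  have hsplit : (P.parts.filter (fun n => 2 ≤ n)).sum
      + (P.parts.filter (fun n => ¬ 2 ≤ n)).sum = k := by
    rw [← Multiset.sum_add, Multiset.filter_add_not, P.parts_sum]
  obtain ⟨g, hg⟩ := (Equiv.Perm.exists_with_cycleType_iff (Fin k)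
    (m := P.parts.filter (fun n => 2 ≤ n))).2
    ⟨by simp only [Fintype.card_fin]; omega,
     fun a ha => (Multiset.mem_filter.1 ha).2⟩
  refine ⟨g, ?_⟩
  ext1
  show g.partition.parts = P.parts
  rw [Equiv.Perm.parts_partition, hg]
  have hsum : g.support.card = (P.parts.filter (fun n => 2 ≤ n)).sum := by
    rw [← Equiv.Perm.sum_cycleType, hg]
  have h1 : ∀ a ∈ P.parts.filter (fun n => ¬ 2 ≤ n), a = 1 := by
    intro a ha
    obtain ⟨hm, h2⟩ := Multiset.mem_filter.1 ha
    have := P.parts_pos hm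
    omega
  have hrep : P.parts.filter (fun n => ¬ 2 ≤ n) =
      Multiset.replicate (Multiset.card (P.parts.filter (fun n => ¬ 2 ≤ n))) 1 :=
    Multiset.eq_replicate_card.2 h1
  have hcard : (P.parts.filter (fun n => ¬ 2 ≤ n)).sum
      = Multiset.card (P.parts.filter (fun n => ¬ 2 ≤ n)) := by
    conv_lhs => rw [hrep]
    simp
  have hfilt : P.parts.filter (fun n => ¬ 2 ≤ n) =
      Multiset.replicate (Fintype.card (Fin k) - g.support.card) 1 := by
    rw [hrep]
    congr 1
    simp only [Fintype.card_fin]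
    omega
  rw [← hfilt, Multiset.filter_add_not]

/-- **Boundary graphs of the `V_1`-model are classified by integer partitions.**
(i) Two closed 3-coloured graphs with coinciding 1- and 2-coloured edges are isomorphic
iff the permutations `(τ 0)⁻¹ * τ 1` and `(τ' 0)⁻¹ * τ' 1` are conjugate.
(ii) Hence the number of isomorphism classes of such graphs with `2k` vertices equals the
number of partitions of `k`. -/
theorem V1_boundary_graphs_partition_count (k : ℕ) (hk : 1 ≤ k) :
    (∀ τ τ' : Fin 3 → Equiv.Perm (Fin k), τ 1 = τ 2 → τ' 1 = τ' 2 →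
      ((∃ π ρ : Equiv.Perm (Fin k), ∀ a : Fin 3, τ' a = ρ * τ a * π⁻¹) ↔
        IsConj ((τ 0)⁻¹ * τ 1) ((τ' 0)⁻¹ * τ' 1))) ∧
    Nat.card (Quot (pairGraphIsoRel k)) = Fintype.card (Nat.Partition k) := by
  constructor
  · intro τ τ' h12 h12'
    rw [← rel_iff_isConj' k (τ 0, τ 1) (τ' 0, τ' 1)]
    constructor
    · rintro ⟨π, ρ, h⟩
      exact ⟨π, ρ, h 0, h 1⟩
    · rintro ⟨π, ρ, h0, h1⟩
      refine ⟨π, ρ, fun a => ?_⟩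
      fin_cases a
      · exact h0
      · exact h1
      · simpa [← h12, ← h12'] using h1
  · have hlift : ∀ p p', pairGraphIsoRel k p p' →
        permPart k (p.1⁻¹ * p.2) = permPart k (p'.1⁻¹ * p'.2) := by
      intro p p' h
      rw [permPart_eq_iff]
      exact (rel_iff_isConj' k p p').1 h
    let F : Quot (pairGraphIsoRel k) → Nat.Partition k :=
      Quot.lift (fun p => permPart k (p.1⁻¹ * p.2)) hlift
    have hbij : Function.Bijective F := by
      constructor
      · rintro ⟨p⟩ ⟨p'⟩ h
        exact Quot.sound ((rel_iff_isConj' k p p').2 ((permPart_eq_iff k _ _).1 h))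
      · intro P
        obtain ⟨σ, hσ⟩ := permPart_surj k P
        exact ⟨Quot.mk _ (1, σ), by simpa [F] using hσ⟩
    rw [Nat.card_eq_of_bijective F hbij, Nat.card_eq_fintype_card]
end

section
/- Let k ≥ 2 and let u, v : ZMod k with u ≠ v; let d be the unique integer with 1 ≤ d ≤ k − 1 representing v − u in ZMod k. Then the permutation (Equiv.swap u v) * (translation by 1) of ZMod k has exactly two orbits, of cardinalities d and k − d; namely {u, u+1, …, u+d−1} and {v, v+1, …, v+(k−d)−1}. Hence the graph obtained from X_{2k} by swapping the colour-0 edges at the two black vertices u and v is isomorphic to the disjoint union X_{2d} ⊔ X_{2(k−d)}. -/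
/-- **Swapping a colour-0 edge of `X_{2k}` splits the cycle in two.**
Let `u ≠ v` in `ZMod k` and let `d` (with `1 ≤ d ≤ k - 1`) represent `v - u`.  The
permutation `(Equiv.swap u v) * (· + 1)` of `ZMod k` has exactly two orbits,
`{u, u+1, …, u+d-1}` of cardinality `d` and `{v, v+1, …, v+(k-d)-1}` of cardinality
`k - d`; hence the graph obtained from `X_{2k}` by swapping the colour-0 edges at the two
black vertices `u`, `v` is isomorphic to the disjoint union `X_{2d} ⊔ X_{2(k-d)}`. -/
theorem swap_splits_cycle (k : ℕ) (hk : 2 ≤ k) (u v : ZMod k) (huv : u ≠ v)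
    (d : ℕ) (hd : d = (v - u).val) :
    let σ : Equiv.Perm (ZMod k) := Equiv.swap u v * Equiv.addRight 1
    1 ≤ d ∧ d ≤ k - 1 ∧
    {y | σ.SameCycle u y} = {y | ∃ i : ℕ, i < d ∧ y = u + (i : ZMod k)} ∧
    {y | σ.SameCycle v y} = {y | ∃ i : ℕ, i < k - d ∧ y = v + (i : ZMod k)} ∧
    {y | σ.SameCycle u y} ∪ {y | σ.SameCycle v y} = Set.univ ∧
    Disjoint {y | σ.SameCycle u y} {y | σ.SameCycle v y} ∧
    Set.ncard {y | σ.SameCycle u y} = d ∧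
    Set.ncard {y | σ.SameCycle v y} = k - d ∧
    ∃ π ρ : ZMod k ≃ (ZMod d ⊕ ZMod (k - d)),
      (∀ x : ZMod d ⊕ ZMod (k - d),
        ρ (σ (π.symm x)) = Sum.map (· + (1 : ZMod d)) (· + (1 : ZMod (k - d))) x) ∧
      (∀ x : ZMod d ⊕ ZMod (k - d), ρ (π.symm x) = x) := by
  intro σ
  haveI : NeZero k := ⟨by omega⟩
  have hvu : v - u ≠ 0 := sub_ne_zero.mpr (Ne.symm huv)
  have hd1 : 1 ≤ d := by
    rw [hd]
    exact Nat.one_le_iff_ne_zero.mpr (fun h => hvu ((ZMod.val_eq_zero _).mp h))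
  have hdk : d < k := hd ▸ ZMod.val_lt _
  have hcastd : ((d : ℕ) : ZMod k) = v - u := by rw [hd, ZMod.natCast_val, ZMod.cast_id]
  have hv : v = u + (d : ZMod k) := by rw [hcastd]; ring
  have hu : u = v + ((k - d : ℕ) : ZMod k) := by
    have h0 : ((d : ℕ) : ZMod k) + ((k - d : ℕ) : ZMod k) = 0 := by
      rw [← Nat.cast_add]
      have : d + (k - d) = k := by omega
      rw [this, ZMod.natCast_self]
    rw [hv, add_assoc, h0, add_zero]
  have hinj : ∀ a b : ℕ, a < k → b < k → ((a : ZMod k) = (b : ZMod k)) → a = b := by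
    intro a b ha hb h
    have := congrArg ZMod.val h
    rwa [ZMod.val_cast_of_lt ha, ZMod.val_cast_of_lt hb] at this
  have hσ : ∀ x, σ x = Equiv.swap u v (x + 1) := fun x => rfl
  -- generic step lemmas for a cycle starting at `a`, of length `L`, with `b = a + L`
  have stepA : ∀ (a b : ZMod k) (L : ℕ), L < k → b = a + (L : ZMod k) →
      (∀ x, σ x = Equiv.swap a b (x + 1)) →
      ∀ m : ℕ, m + 1 < L → σ (a + (m : ZMod k)) = a + ((m + 1 : ℕ) : ZMod k) := by
    intro a b L hLk hb hsw m hm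
    rw [hsw]
    have h1 : a + (m : ZMod k) + 1 = a + ((m + 1 : ℕ) : ZMod k) := by push_cast; ring
    rw [h1]
    have hne1 : a + ((m + 1 : ℕ) : ZMod k) ≠ a := by
      intro h
      have : ((m + 1 : ℕ) : ZMod k) = ((0 : ℕ) : ZMod k) := by
        have := add_left_cancel (a := a) (by simpa using h)
        simpa using this
      have := hinj _ _ (by omega) (by omega) this
      omega
    have hne2 : a + ((m + 1 : ℕ) : ZMod k) ≠ b := by
      rw [hb]
      intro h
      have := hinj _ _ (by omega) hLk (add_left_cancel h)
      omega
    rw [Equiv.swap_apply_of_ne_of_ne hne1 hne2]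
  have stepB : ∀ (a b : ZMod k) (L : ℕ), 1 ≤ L → L < k → b = a + (L : ZMod k) →
      (∀ x, σ x = Equiv.swap a b (x + 1)) →
      σ (a + ((L - 1 : ℕ) : ZMod k)) = a := by
    intro a b L hL1 hLk hb hsw
    rw [hsw]
    have h1 : a + ((L - 1 : ℕ) : ZMod k) + 1 = b := by
      rw [hb]
      have : ((L - 1 : ℕ) : ZMod k) + 1 = ((L - 1 + 1 : ℕ) : ZMod k) := by push_cast; ring
      rw [add_assoc, this]
      congr 2
      omega
    rw [h1, Equiv.swap_apply_right]
  have cyc : ∀ (a b : ZMod k) (L : ℕ), 1 ≤ L → L < k → b = a + (L : ZMod k) →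
      (∀ x, σ x = Equiv.swap a b (x + 1)) →
      ∀ i : ℕ, (σ ^ i) a = a + ((i % L : ℕ) : ZMod k) := by
    intro a b L hL1 hLk hb hsw i
    induction i with
    | zero => simp
    | succ i ih =>
      rw [pow_succ', Equiv.Perm.mul_apply, ih]
      rcases Nat.lt_or_ge (i % L + 1) L with h | h
      · rw [stepA a b L hLk hb hsw _ h]
        congr 2
        have h1L : (1 : ℕ) % L = 1 := Nat.mod_eq_of_lt (by omega)
        rw [Nat.add_mod, h1L, Nat.mod_eq_of_lt h]
      · have hiL : i % L = L - 1 := by have := Nat.mod_lt i (show 0 < L by omega); omega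
        rw [hiL, stepB a b L hL1 hLk hb hsw]
        have hz : (i + 1) % L = 0 := by
          rcases Nat.eq_or_lt_of_le hL1 with h1 | h1
          · simp [← h1, Nat.mod_one]
          · rw [Nat.add_mod, hiL, Nat.mod_eq_of_lt h1]
            have h2 : L - 1 + 1 = L := by omega
            rw [h2, Nat.mod_self]
        rw [hz]
        simp
  have orb : ∀ (a b : ZMod k) (L : ℕ), 1 ≤ L → L < k → b = a + (L : ZMod k) →
      (∀ x, σ x = Equiv.swap a b (x + 1)) →
      {y | σ.SameCycle a y} = {y | ∃ i : ℕ, i < L ∧ y = a + (i : ZMod k)} := by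
    intro a b L hL1 hLk hb hsw
    ext y
    simp only [Set.mem_setOf_eq]
    constructor
    · intro h
      obtain ⟨n, hn, hny⟩ := h.exists_pow_eq'
      refine ⟨n % L, Nat.mod_lt _ (by omega), ?_⟩
      rw [← hny, cyc a b L hL1 hLk hb hsw]
    · rintro ⟨i, hi, rfl⟩
      exact ⟨(i : ℤ), by rw [zpow_natCast, cyc a b L hL1 hLk hb hsw, Nat.mod_eq_of_lt hi]⟩
  have hswv : ∀ x, σ x = Equiv.swap v u (x + 1) := by
    intro x; rw [hσ, Equiv.swap_comm]
  have hek : k - d < k := by omega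
  have he1 : 1 ≤ k - d := by omega
  have orbU := orb u v d hd1 hdk hv hσ
  have orbV := orb v u (k - d) he1 hek hu hswv
  have hxrep : ∀ x : ZMod k, x = u + ((x - u).val : ZMod k) := by
    intro x; rw [ZMod.natCast_val, ZMod.cast_id]; ring
  have hvadd : ∀ j : ℕ, v + (j : ZMod k) = u + ((d + j : ℕ) : ZMod k) := by
    intro j; rw [hv]; push_cast; ring
  have hunion : {y | σ.SameCycle u y} ∪ {y | σ.SameCycle v y} = Set.univ := by
    rw [orbU, orbV]
    ext x
    simp only [Set.mem_union, Set.mem_setOf_eq, Set.mem_univ, iff_true]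
    have hmk : (x - u).val < k := ZMod.val_lt _
    rcases Nat.lt_or_ge (x - u).val d with h | h
    · exact Or.inl ⟨(x - u).val, h, hxrep x⟩
    · refine Or.inr ⟨(x - u).val - d, by omega, ?_⟩
      rw [hvadd]
      have h2 : d + ((x - u).val - d) = (x - u).val := by omega
      rw [h2]
      exact hxrep x
  have hdisj : Disjoint {y | σ.SameCycle u y} {y | σ.SameCycle v y} := by
    rw [orbU, orbV, Set.disjoint_left]
    rintro y ⟨i, hi, rfl⟩ ⟨j, hj, hy⟩
    rw [hvadd] at hy
    have := hinj i (d + j) (by omega) (by omega) (add_left_cancel hy)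
    omega
  have hcard : ∀ (a : ZMod k) (L : ℕ), L < k →
      Set.ncard {y | ∃ i : ℕ, i < L ∧ y = a + (i : ZMod k)} = L := by
    intro a L hLk
    have hset : {y | ∃ i : ℕ, i < L ∧ y = a + (i : ZMod k)}
        = ↑((Finset.range L).image (fun i : ℕ => a + (i : ZMod k))) := by
      ext y
      simp only [Set.mem_setOf_eq, Finset.coe_image, Set.mem_image, Finset.coe_range,
        Set.mem_Iio]
      constructor
      · rintro ⟨i, hi, rfl⟩; exact ⟨i, hi, rfl⟩
      · rintro ⟨i, hi, rfl⟩; exact ⟨i, hi, rfl⟩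
    rw [hset, Set.ncard_coe_finset, Finset.card_image_of_injOn, Finset.card_range]
    intro i hi j hj hij
    simp only [Finset.coe_range, Set.mem_Iio] at hi hj
    exact hinj i j (by omega) (by omega) (add_left_cancel hij)
  refine ⟨hd1, by omega, orbU, orbV, hunion, hdisj, by rw [orbU]; exact hcard u d hdk,
    by rw [orbV]; exact hcard v (k - d) hek, ?_⟩
  haveI : NeZero d := ⟨by omega⟩
  haveI : NeZero (k - d) := ⟨by omega⟩
  set f : ZMod k → ZMod d ⊕ ZMod (k - d) := fun x =>
    if (x - u).val < d then Sum.inl (((x - u).val : ℕ) : ZMod d)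
    else Sum.inr ((((x - u).val - d : ℕ)) : ZMod (k - d)) with hfdef
  set g : ZMod d ⊕ ZMod (k - d) → ZMod k := fun s =>
    Sum.elim (fun i : ZMod d => u + ((i.val : ℕ) : ZMod k))
      (fun j : ZMod (k - d) => u + ((d + j.val : ℕ) : ZMod k)) s with hgdef
  have hfl : ∀ c : ℕ, c < d → f (u + (c : ZMod k)) = Sum.inl ((c : ℕ) : ZMod d) := by
    intro c hc
    have hval : (u + (c : ZMod k) - u).val = c := by
      rw [add_sub_cancel_left, ZMod.val_cast_of_lt (by omega)]
    rw [hfdef]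
    simp only [hval]
    rw [if_pos hc]
  have hfr : ∀ c : ℕ, c < k - d →
      f (u + ((d + c : ℕ) : ZMod k)) = Sum.inr ((c : ℕ) : ZMod (k - d)) := by
    intro c hc
    have hval : (u + ((d + c : ℕ) : ZMod k) - u).val = d + c := by
      rw [add_sub_cancel_left, ZMod.val_cast_of_lt (by omega)]
    rw [hfdef]
    simp only [hval]
    rw [if_neg (show ¬(d + c < d) by omega)]
    rw [Nat.add_sub_cancel_left]
  have left_inv : ∀ x : ZMod k, g (f x) = x := by
    intro x
    have hmk : (x - u).val < k := ZMod.val_lt _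
    rw [hfdef]
    simp only
    split_ifs with h
    · rw [hgdef]
      simp only [Sum.elim_inl]
      rw [ZMod.val_cast_of_lt h]
      exact (hxrep x).symm
    · rw [hgdef]
      simp only [Sum.elim_inr]
      rw [ZMod.val_cast_of_lt (show (x - u).val - d < k - d by omega)]
      have h2 : d + ((x - u).val - d) = (x - u).val := by omega
      rw [h2]
      exact (hxrep x).symm
  have right_inv : ∀ s : ZMod d ⊕ ZMod (k - d), f (g s) = s := by
    rintro (i | j)
    · rw [hgdef]
      simp only [Sum.elim_inl]
      rw [hfl i.val (ZMod.val_lt i)]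
      rw [ZMod.natCast_val, ZMod.cast_id]
    · rw [hgdef]
      simp only [Sum.elim_inr]
      rw [hfr j.val (ZMod.val_lt j)]
      rw [ZMod.natCast_val, ZMod.cast_id]
  set π : ZMod k ≃ (ZMod d ⊕ ZMod (k - d)) := ⟨f, g, left_inv, right_inv⟩ with hπdef
  refine ⟨π, π, ?_, fun x => π.apply_symm_apply x⟩
  have hπl : ∀ c : ℕ, c < d → π (u + (c : ZMod k)) = Sum.inl ((c : ℕ) : ZMod d) := hfl
  have hπr : ∀ c : ℕ, c < k - d →
      π (u + ((d + c : ℕ) : ZMod k)) = Sum.inr ((c : ℕ) : ZMod (k - d)) := hfr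
  have hπsl : ∀ i : ZMod d, π.symm (Sum.inl i) = u + ((i.val : ℕ) : ZMod k) := fun i => rfl
  have hπsr : ∀ j : ZMod (k - d), π.symm (Sum.inr j) = u + ((d + j.val : ℕ) : ZMod k) :=
    fun j => rfl
  have hmodl : ∀ i : ZMod d, i + 1 = (((i.val + 1) % d : ℕ) : ZMod d) := by
    intro i
    rw [ZMod.natCast_mod]
    push_cast
    rw [ZMod.natCast_val, ZMod.cast_id]
  have hmodr : ∀ j : ZMod (k - d), j + 1 = (((j.val + 1) % (k - d) : ℕ) : ZMod (k - d)) := by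
    intro j
    rw [ZMod.natCast_mod]
    push_cast
    rw [ZMod.natCast_val, ZMod.cast_id]
  rintro (i | j)
  · rw [hπsl]
    have hival : i.val < d := ZMod.val_lt i
    rcases Nat.lt_or_ge (i.val + 1) d with h | h
    · rw [stepA u v d hdk hv hσ i.val h, hπl _ h]
      simp only [Sum.map_inl]
      rw [hmodl, Nat.mod_eq_of_lt h]
    · have h1 : i.val = d - 1 := by omega
      rw [h1, stepB u v d hd1 hdk hv hσ]
      have h0 : u = u + ((0 : ℕ) : ZMod k) := by simp
      rw [h0, hπl 0 (by omega)]
      simp only [Sum.map_inl]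
      rw [hmodl, h1]
      have h2 : (d - 1 + 1) % d = 0 := by
        have : d - 1 + 1 = d := by omega
        rw [this, Nat.mod_self]
      rw [h2]
  · rw [hπsr]
    have hjval : j.val < k - d := ZMod.val_lt j
    have hjv : u + ((d + j.val : ℕ) : ZMod k) = v + ((j.val : ℕ) : ZMod k) :=
      (hvadd j.val).symm
    rw [hjv]
    rcases Nat.lt_or_ge (j.val + 1) (k - d) with h | h
    · rw [stepA v u (k - d) hek hu hswv j.val h, hvadd (j.val + 1), hπr _ h]
      simp only [Sum.map_inr]
      rw [hmodr, Nat.mod_eq_of_lt h]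
    · have h1 : j.val = k - d - 1 := by omega
      rw [h1, stepB v u (k - d) he1 hek hu hswv]
      have h0 : v = u + ((d + 0 : ℕ) : ZMod k) := by
        rw [hv]; norm_num
      rw [h0, hπr 0 (by omega)]
      simp only [Sum.map_inr]
      rw [hmodr, h1]
      have h2 : (k - d - 1 + 1) % (k - d) = 0 := by
        have : k - d - 1 + 1 = k - d := by omega
        rw [this, Nat.mod_self]
      rw [h2]
end

section
/- Let k ≥ 1 and let X_{2k} be the closed 3-coloured graph on ZMod k encoded by τ 0 = (translation by 1) and τ 1 = τ 2 = identity. Then the total number of bicoloured faces of X_{2k}, i.e. F = ∑_{a<b} (number of orbits of the permutation (τ a)⁻¹ * (τ b) on ZMod k), equals k + 2; consequently its Gurău degree ω = (k + 2 − F)/2 equals 0, i.e. X_{2k} is melonic. -/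
lemma card_quot_sameCycle_one (k : ℕ) :
    Nat.card (Quot ((1 : Equiv.Perm (ZMod k))).SameCycle) = k := by
  have e : Quot ((1 : Equiv.Perm (ZMod k))).SameCycle ≃ ZMod k :=
    { toFun := Quot.lift id fun a b h => Equiv.Perm.sameCycle_one.mp h
      invFun := Quot.mk _
      left_inv := by intro x; induction x using Quot.ind; rfl
      right_inv := fun x => rfl }
  rw [Nat.card_congr e, Nat.card_zmod]

lemma card_quot_sameCycle_addRight (k : ℕ) (hk : 1 ≤ k) :
    Nat.card (Quot ((Equiv.addRight (1 : ZMod k))⁻¹).SameCycle) = 1 := by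
  haveI : NeZero k := ⟨by omega⟩
  have htot : ∀ x y : ZMod k, ((Equiv.addRight (1 : ZMod k))⁻¹).SameCycle x y := by
    intro x y
    refine ⟨-(((y - x : ZMod k)).val : ℤ), ?_⟩
    rw [inv_zpow', neg_neg, zpow_natCast, Equiv.nsmul_addRight]
    show x + (y - x).val • (1 : ZMod k) = y
    rw [nsmul_eq_mul, mul_one, ZMod.natCast_val, ZMod.cast_id]
    ring
  haveI : Subsingleton (Quot ((Equiv.addRight (1 : ZMod k))⁻¹).SameCycle) := by
    constructor
    intro a b
    induction a using Quot.ind with | _ x =>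
    induction b using Quot.ind with | _ y =>
    exact Quot.sound (htot x y)
  haveI : Nonempty (Quot ((Equiv.addRight (1 : ZMod k))⁻¹).SameCycle) := ⟨Quot.mk _ 0⟩
  haveI : Unique (Quot ((Equiv.addRight (1 : ZMod k))⁻¹).SameCycle) :=
    uniqueOfSubsingleton (Classical.arbitrary _)
  exact Nat.card_unique

/-- **`X_{2k}` is melonic.**  `X_{2k}` is encoded on `ZMod k` by `τ 0 = (· + 1)`,
`τ 1 = τ 2 = 1`.  Its bicoloured faces of colours `(a, b)` are the orbits (cycles) of the
permutation `(τ a)⁻¹ * τ b`; the total face number `F` over the pairs `a < b` equals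
`k + 2`, so its Gurău degree `ω = (k + 2 - F) / 2` equals `0`. -/
theorem X2k_faces_and_degree (k : ℕ) (hk : 1 ≤ k) :
    let τ : Fin 3 → Equiv.Perm (ZMod k) := ![Equiv.addRight 1, 1, 1]
    let F : ℕ := Nat.card (Quot ((τ 0)⁻¹ * τ 1).SameCycle) +
      Nat.card (Quot ((τ 0)⁻¹ * τ 2).SameCycle) +
      Nat.card (Quot ((τ 1)⁻¹ * τ 2).SameCycle)
    F = k + 2 ∧ (k + 2 - F) / 2 = 0 := by
  intro τ F
  have hF : F = k + 2 := by
    have h01 : (τ 0)⁻¹ * τ 1 = (Equiv.addRight (1 : ZMod k))⁻¹ := by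
      simp [τ]
    have h02 : (τ 0)⁻¹ * τ 2 = (Equiv.addRight (1 : ZMod k))⁻¹ := by
      simp [τ]
    have h12 : (τ 1)⁻¹ * τ 2 = (1 : Equiv.Perm (ZMod k)) := by
      simp [τ]
    simp only [F, h01, h02, h12, card_quot_sameCycle_addRight k hk,
      card_quot_sameCycle_one k]
    omega
  exact ⟨hF, by omega⟩
end
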